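/- Let k be a field, n, s ≥ 2, and A = k[x,y]/(xⁿ − yˢ, xy). Let T^x be the two-term cochain complex A --·x--> A concentrated in degrees −1 and 0, an object of K^b(proj A), and let u : T^x → A⟦1⟧ ⊕ A be the chain map whose component in degree −1 is the identity A → A (into the summand A⟦1⟧) and whose component in degree 0 is multiplication by y : A → A (into the summand A). Then: (i) for every i ∈ ℤ, every morphism T^x → A⟦i⟧ in K^b(proj A) factors through u; and (ii) the mapping cone of u is isomorphic in K^b(proj A) to T^y, the complex A --·y--> A in degrees −1 and 0. -/

import Mathlib

set_option linter.unusedSectionVars false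

open CategoryTheory Category Limits ZeroObject

namespace ForPaper

variable {V : Type*} [Category V] [Preadditive V] [HasZeroObject V]

/-- The graded object with `P` in degree `-1`, `Q` in degree `0` and `0` elsewhere. -/
noncomputable def deg (P Q : V) (n : ℤ) : V :=
  if n = -1 then P else if n = 0 then Q else 0

lemma deg_neg_one (P Q : V) : deg P Q (-1) = P := if_pos rfl

lemma deg_zero (P Q : V) : deg P Q 0 = Q := by simp [deg]

lemma deg_eq_zero (P Q : V) (n : ℤ) (h₁ : n ≠ -1) (h₂ : n ≠ 0) : deg P Q n = 0 := by
  simp [deg, h₁, h₂]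

/-- The two-term cochain complex `P ⟶ Q` concentrated in (cohomological) degrees `-1`
and `0`. -/
noncomputable def twoTerm {P Q : V} (f : P ⟶ Q) : CochainComplex V ℤ where
  X := deg P Q
  d i j :=
    if h : i = -1 ∧ j = 0 then
      eqToHom (by rw [h.1, deg_neg_one]) ≫ f ≫ eqToHom (by rw [h.2, deg_zero])
    else 0
  shape i j hij := by
    rw [dif_neg]
    rintro ⟨rfl, rfl⟩
    exact hij (by simp)
  d_comp_d' i j l _ _ := by
    by_cases h : i = -1 ∧ j = 0
    · have h' : ¬(j = -1 ∧ l = 0) := by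
        rintro ⟨rfl, -⟩
        exact absurd h.2 (by decide)
      rw [dif_neg h', comp_zero]
    · rw [dif_neg h, zero_comp]

lemma twoTerm_X_neg_one {P Q : V} (f : P ⟶ Q) : (twoTerm f).X (-1) = P := deg_neg_one P Q

lemma twoTerm_X_zero {P Q : V} (f : P ⟶ Q) : (twoTerm f).X 0 = Q := deg_zero P Q

lemma twoTerm_d {P Q : V} (f : P ⟶ Q) :
    (twoTerm f).d (-1) 0 =
      eqToHom (twoTerm_X_neg_one f) ≫ f ≫ eqToHom (twoTerm_X_zero f).symm := by
  simp [twoTerm]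

/-- The stalk complex with `Q` in degree `0`, realized as a two-term complex. -/
noncomputable def stalk0 (Q : V) : CochainComplex V ℤ := twoTerm (0 : 0 ⟶ Q)

/-- The stalk complex with `P` in degree `-1` (i.e. `P⟦1⟧`), realized as a two-term
complex. -/
noncomputable def stalkNeg1 (P : V) : CochainComplex V ℤ := twoTerm (0 : P ⟶ 0)

lemma stalk0_X_zero (Q : V) : (stalk0 Q).X 0 = Q := deg_zero (0 : V) Q

lemma stalkNeg1_X_neg_one (P : V) : (stalkNeg1 P).X (-1) = P := deg_neg_one P (0 : V)

end ForPaper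

open ForPaper

set_option synthInstance.maxHeartbeats 1000000
set_option maxHeartbeats 1000000

universe u

/-- The quotient functor from complexes to `K(Mod A)`. -/
noncomputable abbrev Kq (A : Type u) [Ring A] :
    CochainComplex (ModuleCat.{u} A) ℤ ⥤
      HomotopyCategory (ModuleCat.{u} A) (ComplexShape.up ℤ) :=
  HomotopyCategory.quotient _ _

/-- Multiplication by `a` on `A`, as an endomorphism of `A` in `ModuleCat A`. -/
noncomputable def mulMap (A : Type u) [CommRing A] (a : A) :
    ModuleCat.of A A ⟶ ModuleCat.of A A :=
  ModuleCat.ofHom (LinearMap.toSpanSingleton A A a)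

/-- The algebra `k[x,y]/(xⁿ - yˢ, xy)`. -/
abbrev DihedralAlg (k : Type u) [Field k] (n s : ℕ) : Type u :=
  MvPolynomial (Fin 2) k ⧸
    Ideal.span {(MvPolynomial.X 0 : MvPolynomial (Fin 2) k) ^ n - MvPolynomial.X 1 ^ s,
      (MvPolynomial.X 0 : MvPolynomial (Fin 2) k) * MvPolynomial.X 1}

/-- The class of `x` in `k[x,y]/(xⁿ - yˢ, xy)`. -/
noncomputable abbrev dihedralX (k : Type u) [Field k] (n s : ℕ) : DihedralAlg k n s :=
  Ideal.Quotient.mk _ (MvPolynomial.X 0 : MvPolynomial (Fin 2) k)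

/-- The class of `y` in `k[x,y]/(xⁿ - yˢ, xy)`. -/
noncomputable abbrev dihedralY (k : Type u) [Field k] (n s : ℕ) : DihedralAlg k n s :=
  Ideal.Quotient.mk _ (MvPolynomial.X 1 : MvPolynomial (Fin 2) k)

/-!
The cone of `u` is `A → A ⊕ A → A` in degrees `-2, -1, 0`. The identity component of `u`
splits off the contractible summand `A --1--> A`, and what remains is `A --·y--> A`. The same
holds for any `f : P ⟶ Q`, `g : Q ⟶ R` with `f ≫ g = 0` in place of `·x`, `·y`.

Every morphism `T^x ⟶ A⟦i⟧` of the homotopy category lifts to a chain map, which can be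
nonzero only for `i = 0, 1`. For `i = 1` it factors through the identity component of `u`. For
`i = 0` it is multiplication by some `c` with `x c = 0`, and it factors through `·y` because the
annihilator of `x` in `A` is `y A`: if `x p ∈ (xⁿ - yˢ, x y)`, then setting `x = 0` and `y = 0`
in a witness shows that `p ≡ a xⁿ = a yˢ` modulo `y`.
-/

namespace ForPaper

open CochainComplex HomComplex

variable {V : Type*} [Category V] [Preadditive V] [HasZeroObject V]

section TwoTerm

lemma isZero_twoTerm_X {P Q : V} (f : P ⟶ Q) {p : ℤ} (h₁ : p ≠ -1) (h₀ : p ≠ 0) :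
    IsZero ((twoTerm f).X p) :=
  (isZero_zero V).of_iso (eqToIso (deg_eq_zero P Q p h₁ h₀))

lemma twoTerm_d_of_ne_neg_one {P Q : V} (f : P ⟶ Q) {i : ℤ} (j : ℤ) (hi : i ≠ -1) :
    (twoTerm f).d i j = 0 :=
  dif_neg fun h => hi h.1

lemma twoTerm_d_of_ne_zero {P Q : V} (f : P ⟶ Q) (i : ℤ) {j : ℤ} (hj : j ≠ 0) :
    (twoTerm f).d i j = 0 :=
  dif_neg fun h => hj h.2

lemma twoTerm_zero_d (P Q : V) (i j : ℤ) : (twoTerm (0 : P ⟶ Q)).d i j = 0 := by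
  by_cases hi : i = -1
  · by_cases hj : j = 0
    · subst hi hj
      simp [twoTerm_d]
    · exact twoTerm_d_of_ne_zero _ _ hj
  · exact twoTerm_d_of_ne_neg_one _ _ hi

lemma twoTerm_hom_ext {P Q : V} {f : P ⟶ Q} {K : CochainComplex V ℤ} {φ ψ : twoTerm f ⟶ K}
    (h₁ : φ.f (-1) = ψ.f (-1)) (h₀ : φ.f 0 = ψ.f 0) : φ = ψ := by
  ext p
  by_cases hp₁ : p = -1
  · subst hp₁
    exact h₁
  by_cases hp₀ : p = 0
  · subst hp₀
    exact h₀
  exact (isZero_twoTerm_X f hp₁ hp₀).eq_of_src _ _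

lemma twoTerm_cochain_ext {P Q : V} {f : P ⟶ Q} {K : CochainComplex V ℤ} {n : ℤ}
    {z z' : Cochain (twoTerm f) K n}
    (h₁ : ∀ q hq, z.v (-1) q hq = z'.v (-1) q hq) (h₀ : ∀ q hq, z.v 0 q hq = z'.v 0 q hq) :
    z = z' := by
  ext p q hpq
  by_cases hp₁ : p = -1
  · subst hp₁
    exact h₁ q hpq
  by_cases hp₀ : p = 0
  · subst hp₀
    exact h₀ q hpq
  exact (isZero_twoTerm_X f hp₁ hp₀).eq_of_src _ _

lemma twoTerm_cochain_two_eq_zero {P Q P' Q' : V} {f : P ⟶ Q} (f' : P' ⟶ Q')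
    (z : Cochain (twoTerm f) (twoTerm f') 2) : z = 0 :=
  twoTerm_cochain_ext
    (fun q hq => (isZero_twoTerm_X f' (p := q) (by omega) (by omega)).eq_of_tgt _ _)
    (fun q hq => (isZero_twoTerm_X f' (p := q) (by omega) (by omega)).eq_of_tgt _ _)

noncomputable def twoTermDesc {P Q : V} (f : P ⟶ Q) {L : CochainComplex V ℤ}
    (a : P ⟶ L.X (-1)) (b : Q ⟶ L.X 0) (ha : a ≫ L.d (-1) 0 = f ≫ b) (hb : b ≫ L.d 0 1 = 0) :
    twoTerm f ⟶ L where
  f p :=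
    if h₁ : p = -1 then
      eqToHom (by rw [h₁, twoTerm_X_neg_one]) ≫ a ≫ (L.XIsoOfEq h₁.symm).hom
    else if h₀ : p = 0 then
      eqToHom (by rw [h₀, twoTerm_X_zero]) ≫ b ≫ (L.XIsoOfEq h₀.symm).hom
    else 0
  comm' i j hij := by
    obtain rfl : j = i + 1 := hij.symm
    by_cases hi₁ : i = -1
    · subst hi₁
      simp [twoTerm_d, ha]
    by_cases hi₀ : i = 0
    · subst hi₀
      simp [twoTerm_d_of_ne_neg_one, hb]
    · rw [twoTerm_d_of_ne_neg_one f _ hi₁, dif_neg hi₁, dif_neg hi₀, zero_comp, zero_comp]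

@[simp]
lemma twoTermDesc_f_neg_one {P Q : V} (f : P ⟶ Q) {L : CochainComplex V ℤ}
    (a : P ⟶ L.X (-1)) (b : Q ⟶ L.X 0) (ha : a ≫ L.d (-1) 0 = f ≫ b) (hb : b ≫ L.d 0 1 = 0) :
    (twoTermDesc f a b ha hb).f (-1) = eqToHom (twoTerm_X_neg_one f) ≫ a := by
  simp [twoTermDesc]

@[simp]
lemma twoTermDesc_f_zero {P Q : V} (f : P ⟶ Q) {L : CochainComplex V ℤ}
    (a : P ⟶ L.X (-1)) (b : Q ⟶ L.X 0) (ha : a ≫ L.d (-1) 0 = f ≫ b) (hb : b ≫ L.d 0 1 = 0) :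
    (twoTermDesc f a b ha hb).f 0 = eqToHom (twoTerm_X_zero f) ≫ b := by
  simp [twoTermDesc]

lemma stalk0_shift_d (S : V) (i p q : ℤ) : ((stalk0 S)⟦i⟧).d p q = 0 := by
  rw [CochainComplex.shiftFunctor_obj_d', stalk0, twoTerm_zero_d, smul_zero]
  rfl

lemma isZero_stalk0_shift_X (S : V) {i p : ℤ} (h : p + i ≠ 0) :
    IsZero (((stalk0 S)⟦i⟧).X p) := by
  change IsZero ((stalk0 S).X (p + i))
  by_cases h₁ : p + i = -1
  · rw [h₁]
    exact (isZero_zero V).of_iso (eqToIso (deg_neg_one 0 S))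
  · exact isZero_twoTerm_X _ h₁ h

lemma stalk0_shift_X (S : V) {i p : ℤ} (h : p + i = 0) : ((stalk0 S)⟦i⟧).X p = S :=
  (congrArg (stalk0 S).X h).trans (stalk0_X_zero S)

end TwoTerm

section TwoTermMap

variable {P Q R : V} {f : P ⟶ Q} {g : Q ⟶ R} (u : twoTerm f ⟶ twoTerm (0 : P ⟶ R))
  (hu₁ : u.f (-1) = eqToHom ((twoTerm_X_neg_one f).trans (twoTerm_X_neg_one (0 : P ⟶ R)).symm))
  (hu₀ : u.f 0 = eqToHom (twoTerm_X_zero f) ≫ g ≫ eqToHom (twoTerm_X_zero (0 : P ⟶ R)).symm)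

include hu₁ hu₀ in
lemma exists_comp_eq_of_d_eq_zero {L : CochainComplex V ℤ} (hL : ∀ i j, L.d i j = 0)
    (hg : ∀ h : Q ⟶ L.X 0, f ≫ h = 0 → ∃ h', g ≫ h' = h) (φ : twoTerm f ⟶ L) :
    ∃ ψ : twoTerm (0 : P ⟶ R) ⟶ L, u ≫ ψ = φ := by
  have hφ : f ≫ eqToHom (twoTerm_X_zero f).symm ≫ φ.f 0 = 0 := by
    have := (φ.comm (-1) 0).symm
    rw [hL, comp_zero, twoTerm_d, assoc, assoc] at this
    exact (cancel_epi _).1 (this.trans comp_zero.symm)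
  obtain ⟨h', hh'⟩ := hg _ hφ
  refine ⟨twoTermDesc 0 (eqToHom (twoTerm_X_neg_one f).symm ≫ φ.f (-1)) h'
    (by simp [hL]) (by simp [hL]), twoTerm_hom_ext ?_ ?_⟩
  · simp [hu₁]
  · simp [hu₀, hh']

include hu₁ hu₀ in
lemma exists_comp_eq_of_stalk0_shift {S : V}
    (hg : ∀ h : Q ⟶ S, f ≫ h = 0 → ∃ h', g ≫ h' = h) (i : ℤ) (φ : twoTerm f ⟶ (stalk0 S)⟦i⟧) :
    ∃ ψ, u ≫ ψ = φ := by
  refine exists_comp_eq_of_d_eq_zero u hu₁ hu₀ (stalk0_shift_d S i) (fun h hh => ?_) φ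
  by_cases hi : i = 0
  · subst hi
    have e : ((stalk0 S)⟦(0 : ℤ)⟧).X 0 ≅ S := eqToIso (stalk0_shift_X S (add_zero 0))
    obtain ⟨h', hh'⟩ := hg (h ≫ e.hom) (by rw [reassoc_of% hh, zero_comp])
    exact ⟨h' ≫ e.inv, by rw [reassoc_of% hh', Iso.hom_inv_id, comp_id]⟩
  · exact ⟨0, (isZero_stalk0_shift_X S (by simpa using hi)).eq_of_tgt _ _⟩

variable [HasBinaryBiproducts V] (hfg : f ≫ g = 0)

include hu₁ hu₀ hfg in
noncomputable def mappingConeToTwoTerm : mappingCone u ⟶ twoTerm g :=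
  mappingCone.desc u
    (Cochain.single (eqToHom ((twoTerm_X_zero f).trans (twoTerm_X_neg_one g).symm)) (-1))
    (twoTermDesc 0 (f ≫ eqToHom (twoTerm_X_neg_one g).symm) (eqToHom (twoTerm_X_zero g).symm)
      (by simp [twoTerm_d, reassoc_of% hfg]) (by simp [twoTerm_d_of_ne_zero]))
    (by
      refine twoTerm_cochain_ext (fun q hq => ?_) (fun q hq => ?_)
      · obtain rfl : q = -1 := by omega
        simp [δ_v (-1) 0 (by omega) _ (-1) (-1) hq (-2) 0 (by omega) (by omega),
          hu₁, twoTerm_d, Cochain.single_v_eq_zero]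
      · obtain rfl : q = 0 := by omega
        simp [δ_v (-1) 0 (by omega) _ 0 0 hq (-1) 1 (by omega) (by omega),
          hu₀, twoTerm_d, twoTerm_d_of_ne_neg_one, Cochain.single_v_eq_zero])

include hu₀ in
noncomputable def twoTermToMappingCone : twoTerm g ⟶ mappingCone u :=
  mappingCone.lift u
    (Cocycle.mk
      (Cochain.single (eqToHom ((twoTerm_X_neg_one g).trans (twoTerm_X_zero f).symm)) 1)
      2 rfl (twoTerm_cochain_two_eq_zero _ _))
    (Cochain.single (eqToHom ((twoTerm_X_zero g).trans (twoTerm_X_zero (0 : P ⟶ R)).symm)) 0)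
    (by
      refine twoTerm_cochain_ext (fun q hq => ?_) (fun q hq => ?_)
      · obtain rfl : q = 0 := by omega
        simp [δ_v 0 1 (by omega) _ (-1) 0 hq (-1) 0 (by omega) (by omega),
          Cochain.comp_v _ _ (add_zero 1) (-1) 0 0 (by omega) (by omega),
          hu₀, twoTerm_d, twoTerm_zero_d]
      · obtain rfl : q = 1 := by omega
        simp [δ_v 0 1 (by omega) _ 0 1 hq 0 1 (by omega) (by omega),
          Cochain.comp_v _ _ (add_zero 1) 0 1 1 (by omega) (by omega),
          twoTerm_zero_d, Cochain.single_v_eq_zero])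

@[simp]
lemma twoTermToMappingCone_f_neg_one :
    (twoTermToMappingCone u hu₀).f (-1) =
      eqToHom ((twoTerm_X_neg_one g).trans (twoTerm_X_zero f).symm) ≫
        (mappingCone.inl u).v 0 (-1) rfl := by
  simp [twoTermToMappingCone, mappingCone.lift_f _ _ _ _ (-1) 0 (by omega),
    Cochain.single_v_eq_zero]

@[simp]
lemma twoTermToMappingCone_f_zero :
    (twoTermToMappingCone u hu₀).f 0 =
      eqToHom ((twoTerm_X_zero g).trans (twoTerm_X_zero (0 : P ⟶ R)).symm) ≫
        (mappingCone.inr u).f 0 := by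
  simp [twoTermToMappingCone, mappingCone.lift_f _ _ _ _ 0 1 (by omega),
    Cochain.single_v_eq_zero]

lemma twoTermToMappingCone_comp_mappingConeToTwoTerm :
    twoTermToMappingCone u hu₀ ≫ mappingConeToTwoTerm u hu₁ hu₀ hfg = 𝟙 _ :=
  twoTerm_hom_ext (by simp [mappingConeToTwoTerm]) (by simp [mappingConeToTwoTerm])

/-- The homotopy from `hom ≫ inv` to `𝟙` is `-𝟙 P`, from the degree `-1` term of the target
of `u` to the degree `-2` term of the cone. -/
noncomputable def mappingConeHomotopyEquivTwoTerm :
    HomotopyEquiv (mappingCone u) (twoTerm g) where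
  hom := mappingConeToTwoTerm u hu₁ hu₀ hfg
  inv := twoTermToMappingCone u hu₀
  homotopyHomInvId := mappingCone.descHomotopy u _ _ 0
    (-(Cochain.single (eqToHom ((twoTerm_X_neg_one (0 : P ⟶ R)).trans
      (twoTerm_X_neg_one f).symm)) 0).comp (mappingCone.inl u) (zero_add (-1)))
    (by
      refine twoTerm_cochain_ext (fun q hq => ?_) (fun q hq => ?_)
      · obtain rfl : q = -2 := by omega
        simp [mappingConeToTwoTerm,
          Cochain.comp_v _ _ (add_zero (-1)) (-1) (-2) (-2) (by omega) (by omega),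
          hu₁, Cochain.single_v_eq_zero]
      · obtain rfl : q = -1 := by omega
        simp [mappingConeToTwoTerm,
          Cochain.comp_v _ _ (add_zero (-1)) 0 (-1) (-1) (by omega) (by omega),
          hu₀, Cochain.single_v_eq_zero])
    (by
      refine twoTerm_cochain_ext (fun q hq => ?_) (fun q hq => ?_)
      · obtain rfl : q = -1 := by omega
        simp [mappingConeToTwoTerm,
          δ_v (-1) 0 (by omega) _ (-1) (-1) hq (-2) 0 (by omega) (by omega),
          mappingCone.inl_v_d u (-1) (-2) 0 (by omega) (by omega),
          hu₁, twoTerm_d, twoTerm_zero_d, Cochain.single_v_eq_zero]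
      · obtain rfl : q = 0 := by omega
        simp [mappingConeToTwoTerm,
          δ_v (-1) 0 (by omega) _ 0 0 hq (-1) 1 (by omega) (by omega),
          twoTerm_zero_d, Cochain.single_v_eq_zero])
  homotopyInvHomId :=
    Homotopy.ofEq (twoTermToMappingCone_comp_mappingConeToTwoTerm u hu₁ hu₀ hfg)

end TwoTermMap

end ForPaper

lemma HomotopyCategory.exists_eq_quotient_map_comp {C : Type*} [Category C] [Preadditive C]
    {K M L : CochainComplex C ℤ} (u : K ⟶ M) (i : ℤ) (h : ∀ φ : K ⟶ L⟦i⟧, ∃ ψ, u ≫ ψ = φ)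
    (φ : (HomotopyCategory.quotient C (.up ℤ)).obj K ⟶
      ((HomotopyCategory.quotient C (.up ℤ)).obj L)⟦i⟧) :
    ∃ ψ, φ = (HomotopyCategory.quotient C (.up ℤ)).map u ≫ ψ := by
  let e := ((HomotopyCategory.quotient C (.up ℤ)).commShiftIso i).app L
  obtain ⟨φ', hφ'⟩ := (HomotopyCategory.quotient C (.up ℤ)).map_surjective (φ ≫ e.inv)
  obtain ⟨ψ, rfl⟩ := h φ'
  refine ⟨(HomotopyCategory.quotient C (.up ℤ)).map ψ ≫ e.hom, ?_⟩
  rw [← Functor.map_comp_assoc, hφ']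
  simp

section MulMap

variable {A : Type u} [CommRing A]

lemma mulMap_comp (a b : A) : mulMap A a ≫ mulMap A b = mulMap A (a * b) := by
  ext
  simp [mulMap]

lemma mulMap_zero : mulMap A 0 = 0 := by
  ext
  simp [mulMap]

lemma mulMap_injective : Function.Injective (mulMap A) := fun a b h => by
  simpa [mulMap] using congrArg (fun φ : ModuleCat.of A A ⟶ ModuleCat.of A A => φ.hom 1) h

lemma exists_mulMap_eq (h : ModuleCat.of A A ⟶ ModuleCat.of A A) : ∃ c, mulMap A c = h :=
  ⟨h.hom 1, by ext; simp [mulMap]⟩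

lemma exists_mulMap_comp_eq {a b : A} (hab : ∀ c, a * c = 0 → ∃ c', b * c' = c)
    (h : ModuleCat.of A A ⟶ ModuleCat.of A A) (hh : mulMap A a ≫ h = 0) :
    ∃ h', mulMap A b ≫ h' = h := by
  obtain ⟨c, rfl⟩ := exists_mulMap_eq h
  obtain ⟨c', rfl⟩ := hab c (mulMap_injective (by rw [← mulMap_comp, hh, mulMap_zero]))
  exact ⟨mulMap A c', mulMap_comp b c'⟩

end MulMap

lemma MvPolynomial.sub_bind₁_update_zero_mem_span_X {σ R : Type*} [CommRing R] [DecidableEq σ]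
    (i : σ) (p : MvPolynomial σ R) : p - bind₁ (Function.update X i 0) p ∈ Ideal.span {X i} := by
  induction p using MvPolynomial.induction_on with
  | C a => simp
  | add p q hp hq => simpa [sub_add_sub_comm] using add_mem hp hq
  | mul_X p j hp =>
    by_cases hj : j = i
    · subst hj
      simpa using Ideal.mul_mem_left _ p (Ideal.mem_span_singleton_self (X j))
    · simpa [Function.update_of_ne hj, sub_mul] using Ideal.mul_mem_right (X j) _ hp

section Dihedral

open MvPolynomial

variable {k : Type u} [Field k] {n s : ℕ}

lemma dihedralX_mul_dihedralY : dihedralX k n s * dihedralY k n s = 0 := by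
  rw [← map_mul, Ideal.Quotient.eq_zero_iff_mem]
  exact Ideal.subset_span (by simp)

lemma exists_dihedralY_mul_eq (hn : 1 ≤ n) (hs : 1 ≤ s) {c : DihedralAlg k n s}
    (hc : dihedralX k n s * c = 0) : ∃ c', dihedralY k n s * c' = c := by
  obtain ⟨p, rfl⟩ := Ideal.Quotient.mk_surjective c
  rw [← map_mul, Ideal.Quotient.eq_zero_iff_mem, Ideal.mem_span_pair] at hc
  obtain ⟨a, b, hab⟩ := hc
  set killX := bind₁ (Function.update (X : Fin 2 → MvPolynomial (Fin 2) k) 0 0)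
  set killY := bind₁ (Function.update (X : Fin 2 → MvPolynomial (Fin 2) k) 1 0)
  have hX : killX a = 0 := by
    simpa [killX, zero_pow (by omega : n ≠ 0)] using congrArg killX hab
  have hY : killY a * X 0 ^ n = X 0 * killY p := by
    simpa [killY, zero_pow (by omega : s ≠ 0)] using congrArg killY hab
  obtain ⟨a', ha'⟩ : X 0 ∣ killY a := by
    have hXY : killX (killY a) = killY (killX a) := by
      rw [← AlgHom.comp_apply, ← AlgHom.comp_apply]
      congr 1
      ext i
      fin_cases i <;> simp [killX, killY]
    rw [← Ideal.mem_span_singleton, ← sub_zero (killY a), ← map_zero killY, ← hX, ← hXY]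
    exact sub_bind₁_update_zero_mem_span_X 0 _
  have hp : killY p = a' * X 0 ^ n :=
    mul_left_cancel₀ (X_ne_zero 0) (by rw [← hY, ha']; ring)
  obtain ⟨t, ht⟩ := Ideal.mem_span_singleton.1 (sub_bind₁_update_zero_mem_span_X 1 p)
  have hxy : (Ideal.Quotient.mk _ (X 0 ^ n) : DihedralAlg k n s) = Ideal.Quotient.mk _ (X 1 ^ s) :=
    Ideal.Quotient.eq.2 (Ideal.subset_span (by simp))
  obtain ⟨s', rfl⟩ : ∃ s', s = s' + 1 := ⟨s - 1, by omega⟩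
  refine ⟨Ideal.Quotient.mk _ t + Ideal.Quotient.mk _ a' * dihedralY k n (s' + 1) ^ s', ?_⟩
  rw [show p = X 1 * t + a' * X 0 ^ n by linear_combination ht + hp, map_add, map_mul, map_mul,
    hxy, map_pow]
  ring

end Dihedral

/-- For `A = k[x,y]/(xⁿ - yˢ, xy)`, `T^x = (A ⟶[·x] A)` in degrees `-1`, `0`, and the
chain map `u : T^x ⟶ A⟦1⟧ ⊕ A` with degree `-1` component the identity and degree `0`
component multiplication by `y`: every morphism `T^x ⟶ A⟦i⟧` in `K^b(proj A)` factors
through `u`, and the mapping cone of `u` is isomorphic to `T^y = (A ⟶[·y] A)`. -/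
theorem statement_17 (k : Type u) [Field k] (n s : ℕ) (hn : 2 ≤ n) (hs : 2 ≤ s)
    (u : twoTerm (mulMap (DihedralAlg k n s) (dihedralX k n s)) ⟶
      twoTerm (0 : ModuleCat.of (DihedralAlg k n s) (DihedralAlg k n s) ⟶
        ModuleCat.of (DihedralAlg k n s) (DihedralAlg k n s)))
    (hu1 : u.f (-1) = eqToHom
      ((twoTerm_X_neg_one (mulMap (DihedralAlg k n s) (dihedralX k n s))).trans
        (twoTerm_X_neg_one (0 : ModuleCat.of (DihedralAlg k n s) (DihedralAlg k n s) ⟶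
          ModuleCat.of (DihedralAlg k n s) (DihedralAlg k n s))).symm))
    (hu0 : u.f 0 = eqToHom (twoTerm_X_zero (mulMap (DihedralAlg k n s) (dihedralX k n s))) ≫
      mulMap (DihedralAlg k n s) (dihedralY k n s) ≫
      eqToHom (twoTerm_X_zero (0 : ModuleCat.of (DihedralAlg k n s) (DihedralAlg k n s) ⟶
        ModuleCat.of (DihedralAlg k n s) (DihedralAlg k n s))).symm) :
    (∀ (i : ℤ) (φ : (Kq (DihedralAlg k n s)).obj
        (twoTerm (mulMap (DihedralAlg k n s) (dihedralX k n s))) ⟶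
        ((Kq (DihedralAlg k n s)).obj
          (stalk0 (ModuleCat.of (DihedralAlg k n s) (DihedralAlg k n s))))⟦i⟧),
      ∃ ψ : (Kq (DihedralAlg k n s)).obj
          (twoTerm (0 : ModuleCat.of (DihedralAlg k n s) (DihedralAlg k n s) ⟶
            ModuleCat.of (DihedralAlg k n s) (DihedralAlg k n s))) ⟶
          ((Kq (DihedralAlg k n s)).obj
            (stalk0 (ModuleCat.of (DihedralAlg k n s) (DihedralAlg k n s))))⟦i⟧,
        φ = (Kq (DihedralAlg k n s)).map u ≫ ψ) ∧
    Nonempty ((Kq (DihedralAlg k n s)).obj (CochainComplex.mappingCone u) ≅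
      (Kq (DihedralAlg k n s)).obj
        (twoTerm (mulMap (DihedralAlg k n s) (dihedralY k n s)))) := by
  have hxy : mulMap _ (dihedralX k n s) ≫ mulMap _ (dihedralY k n s) = 0 := by
    rw [mulMap_comp, dihedralX_mul_dihedralY, mulMap_zero]
  refine ⟨fun i φ => HomotopyCategory.exists_eq_quotient_map_comp u i
      (exists_comp_eq_of_stalk0_shift u hu1 hu0
        (exists_mulMap_comp_eq fun _ hc => exists_dihedralY_mul_eq (by omega) (by omega) hc) i) φ,
    ⟨HomotopyCategory.isoOfHomotopyEquiv (mappingConeHomotopyEquivTwoTerm u hu1 hu0 hxy)⟩⟩
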